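/- arXiv:math/9903118 — 4 statements merged into one kernel-verified Lean document; each statement's English description precedes it below -/
import Mathlib

section
/- Let P : E → E be a linear map (not assumed continuous), and write P − z₀ for the map f ↦ P f − z₀ f. Suppose that (i) for every z ∈ U \ {z₀} and every f ∈ E one has P(R(z)f) − z·(R(z)f) = f, and (ii) for every f ∈ E the map z ↦ P(H(z)f) is bounded on some neighborhood of z₀ in U. Then for every f ∈ E one has (P − z₀)(A₋ⱼ f) = A₋₍ⱼ₊₁₎ f for all 1 ≤ j ≤ k−1 and (P − z₀)(A₋ₖ f) = 0. Consequently A₋ⱼ f = (P − z₀)^{j−1}(A₋₁ f) for all 1 ≤ j ≤ k and all f ∈ E, the composition (P − z₀)^k ∘ A₋₁ is zero, and if A₋ₖ ≠ 0 then (P − z₀)^{k−1} ∘ A₋₁ ≠ 0. -/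
/-!
Write `w = z - z₀`. Since `P - z = (P - z₀) - w` and multiplication by `w` lowers every
exponent of the principal part by one, applying `P - z` to `R(z) f` gives
`∑ⱼ w⁻ʲ ((P - z₀) A₋ⱼ f - A₋₍ⱼ₊₁₎ f) = f + A₋₁ f - (P - z) H(z) f` (with `A₋₍ₖ₊₁₎ := 0`).
The right-hand side is bounded near `z₀`, and a bounded finite principal part vanishes
identically: after multiplication by `wᵏ` it tends both to its top coefficient and to `0`,
and one descends on `k`. The remaining claims follow by iterating the recursion.
-/

open Filter Topology Finset Asymptotics

section PrincipalPart

variable {𝕜 E : Type*}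

/-- `c i` is the coefficient of `(z - z₀) ^ (-(i + 1))`. -/
def principalPart [Field 𝕜] [AddCommGroup E] [Module 𝕜 E] (z₀ : 𝕜) (c : ℕ → E) (n : ℕ)
    (z : 𝕜) : E :=
  ∑ i ∈ range n, (z - z₀) ^ (-(i + 1 : ℤ)) • c i

section Algebra

variable [Field 𝕜] [AddCommGroup E] [Module 𝕜 E] (z₀ : 𝕜)

theorem sum_Icc_zpow_smul_eq_principalPart (b : ℕ → E) (n : ℕ) (z : 𝕜) :
    ∑ j ∈ Icc 1 n, (z - z₀) ^ (-(j : ℤ)) • b j = principalPart z₀ (fun i => b (i + 1)) n z := by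
  rw [← Ico_add_one_right_eq_Icc, sum_Ico_eq_sum_range, Nat.add_sub_cancel, principalPart]
  refine sum_congr rfl fun i _ => ?_
  rw [add_comm 1 i]
  push_cast
  rfl

theorem principalPart_succ (c : ℕ → E) (n : ℕ) (z : 𝕜) :
    principalPart z₀ c (n + 1) z = principalPart z₀ c n z + (z - z₀) ^ (-(n + 1 : ℤ)) • c n :=
  sum_range_succ _ _

theorem principalPart_sub (c d : ℕ → E) (n : ℕ) (z : 𝕜) :
    principalPart z₀ (fun i => c i - d i) n z = principalPart z₀ c n z - principalPart z₀ d n z := by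
  simp only [principalPart, smul_sub, sum_sub_distrib]

theorem smul_principalPart (r : 𝕜) (c : ℕ → E) (n : ℕ) (z : 𝕜) :
    r • principalPart z₀ c n z = principalPart z₀ (fun i => r • c i) n z := by
  simp only [principalPart, Finset.smul_sum, smul_comm r]

theorem map_principalPart {F : Type*} [AddCommGroup F] [Module 𝕜 F] (T : E →ₗ[𝕜] F)
    (c : ℕ → E) (n : ℕ) (z : 𝕜) :
    T (principalPart z₀ c n z) = principalPart z₀ (fun i => T (c i)) n z := by
  simp only [principalPart, map_sum, map_smul]

theorem sub_smul_principalPart_succ {z : 𝕜} (hz : z ≠ z₀) (c : ℕ → E) (n : ℕ) :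
    (z - z₀) • principalPart z₀ c (n + 1) z = c 0 + principalPart z₀ (fun i => c (i + 1)) n z := by
  have hw : z - z₀ ≠ 0 := sub_ne_zero.mpr hz
  have hshift : ∀ (m : ℕ) (x : E),
      (z - z₀) • (z - z₀) ^ (-((m + 1 : ℕ) + 1 : ℤ)) • x = (z - z₀) ^ (-(m + 1 : ℤ)) • x := by
    intro m x
    rw [smul_smul, ← zpow_one_add₀ hw]
    push_cast
    ring_nf
  rw [principalPart, sum_range_succ', smul_add, Finset.smul_sum, add_comm]
  simp only [hshift, smul_smul, ← zpow_one_add₀ hw]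
  simp [principalPart]

theorem map_sub_smul_principalPart_succ (P : E →ₗ[𝕜] E) {z : 𝕜} (hz : z ≠ z₀) (a : ℕ → E)
    (n : ℕ) :
    P (principalPart z₀ a (n + 1) z) - z • principalPart z₀ a (n + 1) z =
      principalPart z₀ (fun i => P (a i) - z₀ • a i - a (i + 1)) n z +
        (z - z₀) ^ (-(n + 1 : ℤ)) • (P (a n) - z₀ • a n) - a 0 := by
  have hsplit : ∀ x : E, P x - z • x = (P x - z₀ • x) - (z - z₀) • x := fun x => by
    rw [sub_smul]; abel
  rw [hsplit, sub_smul_principalPart_succ z₀ hz, principalPart_sub, principalPart_sub,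
    map_principalPart, principalPart_succ, principalPart_succ, smul_add, smul_principalPart, smul_comm z₀, smul_sub]
  abel

end Algebra

section Vanishing

variable [NontriviallyNormedField 𝕜] [NormedAddCommGroup E] [NormedSpace 𝕜 E] {z₀ : 𝕜}

theorem tendsto_pow_smul_principalPart (c : ℕ → E) (n : ℕ) :
    Tendsto (fun z => (z - z₀) ^ (n + 1) • principalPart z₀ c n z) (𝓝[≠] z₀) (𝓝 0) := by
  have hpoly : Tendsto (fun z => ∑ i ∈ range n, (z - z₀) ^ (n - i) • c i) (𝓝 z₀) (𝓝 0) := by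
    have hcont : Continuous fun z => ∑ i ∈ range n, (z - z₀) ^ (n - i) • c i := by fun_prop
    convert hcont.tendsto z₀ using 2
    refine (sum_eq_zero fun i hi => ?_).symm
    rw [sub_self, zero_pow (by simp only [mem_range] at hi; omega), zero_smul]
  refine (hpoly.mono_left nhdsWithin_le_nhds).congr' ?_
  filter_upwards [self_mem_nhdsWithin] with z hz
  rw [principalPart, Finset.smul_sum]
  refine sum_congr rfl fun i hi => ?_
  rw [smul_smul, ← zpow_natCast, ← zpow_natCast, ← zpow_add₀ (sub_ne_zero.mpr hz)]
  simp only [mem_range] at hi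
  push_cast [hi.le]
  ring_nf

theorem eq_zero_of_isBigO_principalPart_add_zpow_smul (c : ℕ → E) (n : ℕ) (d : E)
    (h : (fun z => principalPart z₀ c n z + (z - z₀) ^ (-(n + 1 : ℤ)) • d) =O[𝓝[≠] z₀]
      (fun _ => (1 : ℝ))) :
    d = 0 := by
  have hpow : Tendsto (fun z => (z - z₀) ^ (n + 1)) (𝓝[≠] z₀) (𝓝 0) := by
    have hcont : Continuous fun z : 𝕜 => (z - z₀) ^ (n + 1) := by fun_prop
    simpa using (hcont.tendsto z₀).mono_left nhdsWithin_le_nhds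
  have hlim₀ := hpow.zero_smul_isBoundedUnder_le ((isBigO_one_iff ℝ).mp h)
  have hlim := (tendsto_pow_smul_principalPart (z₀ := z₀) c n).add_const d
  rw [zero_add] at hlim
  refine tendsto_nhds_unique (hlim.congr' ?_) hlim₀
  filter_upwards [self_mem_nhdsWithin] with z hz
  rw [smul_add, smul_smul, ← zpow_natCast, ← zpow_add₀ (sub_ne_zero.mpr hz)]
  simp

theorem principalPart_coeff_eq_zero_of_isBigO (c : ℕ → E) (n : ℕ)
    (h : (fun z => principalPart z₀ c n z) =O[𝓝[≠] z₀] (fun _ => (1 : ℝ))) :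
    ∀ i < n, c i = 0 := by
  induction n with
  | zero => simp
  | succ n ih =>
    simp only [principalPart_succ] at h
    have hn : c n = 0 := eq_zero_of_isBigO_principalPart_add_zpow_smul c n (c n) h
    simp only [hn, smul_zero, add_zero] at h
    intro i hi
    rcases Nat.lt_succ_iff_lt_or_eq.mp hi with hi | rfl
    exacts [ih h i hi, hn]

end Vanishing

end PrincipalPart

theorem eq_pow_apply_of_apply_eq_succ {R M : Type*} [Semiring R] [AddCommMonoid M] [Module R M]
    (T : Module.End R M) (a : ℕ → M) {n : ℕ} (h : ∀ i < n, T (a i) = a (i + 1)) :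
    ∀ i ≤ n, a i = (T ^ i) (a 0) := by
  intro i hi
  induction i with
  | zero => rfl
  | succ i ih => rw [← h i hi, ih (by omega), pow_succ', Module.End.mul_apply]

theorem coeff_recursion_of_resolvent {𝕜 E : Type*} [NontriviallyNormedField 𝕜]
    [NormedAddCommGroup E] [NormedSpace 𝕜 E] (z₀ : 𝕜) (P : E →ₗ[𝕜] E) (a : ℕ → E) (h : 𝕜 → E)
    (f : E) (n : ℕ)
    (hres : ∀ᶠ z in 𝓝[≠] z₀,
      P (principalPart z₀ a (n + 1) z + h z) - z • (principalPart z₀ a (n + 1) z + h z) = f)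
    (hh : ContinuousAt h z₀) (hPh : IsBoundedUnder (· ≤ ·) (𝓝[≠] z₀) fun z => ‖P (h z)‖) :
    (∀ i < n, P (a i) - z₀ • a i = a (i + 1)) ∧ P (a n) - z₀ • a n = 0 := by
  have hbdd : (fun z => P (h z) - z • h z) =O[𝓝[≠] z₀] (fun _ => (1 : ℝ)) :=
    ((isBigO_one_iff ℝ).mpr hPh).sub
      (((continuousAt_id.smul hh).tendsto.mono_left nhdsWithin_le_nhds).isBigO_one ℝ)
  have hpp : (fun z => principalPart z₀ (fun i => P (a i) - z₀ • a i - a (i + 1)) n z +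
      (z - z₀) ^ (-(n + 1 : ℤ)) • (P (a n) - z₀ • a n)) =O[𝓝[≠] z₀] (fun _ => (1 : ℝ)) := by
    refine ((isBigO_const_one ℝ (f + a 0) _).sub hbdd).congr' ?_ EventuallyEq.rfl
    filter_upwards [hres, self_mem_nhdsWithin] with z hz hne
    rw [← hz, map_add, smul_add]
    linear_combination (norm := module) map_sub_smul_principalPart_succ z₀ P hne a n
  have htop := eq_zero_of_isBigO_principalPart_add_zpow_smul _ n _ hpp
  simp only [htop, smul_zero, add_zero] at hpp
  exact ⟨fun i hi => sub_eq_zero.mp (principalPart_coeff_eq_zero_of_isBigO _ n hpp i hi), htop⟩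

theorem stmt_0_general
    {E : Type*} [NormedAddCommGroup E] [NormedSpace ℂ E]
    (z₀ : ℂ) (k : ℕ) (hk : 1 ≤ k)
    (U : Set ℂ) (hU : IsOpen U) (hz₀ : z₀ ∈ U)
    (A : ℕ → (E →L[ℂ] E)) (H : ℂ → (E →L[ℂ] E))
    (hH : AnalyticOnNhd ℂ H U)
    (R : ℂ → (E →L[ℂ] E))
    (hR : ∀ z ∈ U \ {z₀},
      R z = (∑ j ∈ Finset.Icc 1 k, (z - z₀) ^ (-(j : ℤ)) • A j) + H z)
    (P : E →ₗ[ℂ] E)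
    (hres : ∀ z ∈ U \ {z₀}, ∀ f : E, P (R z f) - z • R z f = f)
    (hbdd : ∀ f : E, ∃ V ∈ 𝓝 z₀, ∃ C : ℝ, ∀ z ∈ V ∩ U, ‖P (H z f)‖ ≤ C) :
    (∀ f : E,
        (∀ j : ℕ, 1 ≤ j → j ≤ k - 1 → P (A j f) - z₀ • A j f = A (j + 1) f) ∧
        P (A k f) - z₀ • A k f = 0) ∧
    (∀ j : ℕ, 1 ≤ j → j ≤ k → ∀ f : E,
        A j f = ((P - z₀ • (1 : Module.End ℂ E)) ^ (j - 1)) (A 1 f)) ∧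
    (∀ f : E, ((P - z₀ • (1 : Module.End ℂ E)) ^ k) (A 1 f) = 0) ∧
    (A k ≠ 0 → ∃ f : E, ((P - z₀ • (1 : Module.End ℂ E)) ^ (k - 1)) (A 1 f) ≠ 0) := by
  obtain ⟨n, rfl⟩ : ∃ n, k = n + 1 := ⟨k - 1, by omega⟩
  have hU' : ∀ᶠ z in 𝓝[≠] z₀, z ∈ U \ {z₀} :=
    inter_mem (nhdsWithin_le_nhds (hU.mem_nhds hz₀)) self_mem_nhdsWithin
  have hRf (f : E) (z : ℂ) (hz : z ∈ U \ {z₀}) :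
      R z f = principalPart z₀ (fun i => A (i + 1) f) (n + 1) z + H z f := by
    rw [hR z hz, sum_Icc_zpow_smul_eq_principalPart, add_apply, principalPart, principalPart,
      _root_.sum_apply]
    simp only [smul_apply]
  have hPH (f : E) : IsBoundedUnder (· ≤ ·) (𝓝[≠] z₀) fun z => ‖P (H z f)‖ := by
    obtain ⟨V, hV, C, hC⟩ := hbdd f
    refine isBoundedUnder_of_eventually_le (a := C) ?_
    filter_upwards [nhdsWithin_le_nhds hV, hU'] with z hzV hzU using hC z ⟨hzV, hzU.1⟩
  have hrel (f : E) := coeff_recursion_of_resolvent z₀ P (fun i => A (i + 1) f)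
    (fun z => H z f) f n (hU'.mono fun z hz => hRf f z hz ▸ hres z hz f)
    ((hH z₀ hz₀).continuousAt.clm_apply continuousAt_const) (hPH f)
  set Q := P - z₀ • (1 : Module.End ℂ E)
  have hpow (f : E) : ∀ i ≤ n, A (i + 1) f = (Q ^ i) (A 1 f) :=
    eq_pow_apply_of_apply_eq_succ Q (fun i => A (i + 1) f) (hrel f).1
  refine ⟨fun f => ⟨fun j hj hjn => ?_, (hrel f).2⟩, fun j hj hjn f => ?_, fun f => ?_, fun hA => ?_⟩
  · obtain ⟨i, rfl⟩ : ∃ i, j = i + 1 := ⟨j - 1, by omega⟩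
    exact (hrel f).1 i (by omega)
  · obtain ⟨i, rfl⟩ : ∃ i, j = i + 1 := ⟨j - 1, by omega⟩
    exact hpow f i (by omega)
  · rw [pow_succ', Module.End.mul_apply, ← hpow f n le_rfl]
    exact (hrel f).2
  · obtain ⟨f, hf⟩ := DFunLike.ne_iff.mp hA
    exact ⟨f, by simpa [← hpow f n le_rfl] using hf⟩

/-- algebraic structure of the Laurent coefficients of a meromorphically
continued resolvent at a resonance `z₀` (Banach-space abstraction of Proposition 2.2). -/
theorem stmt_0
    {E : Type*} [NormedAddCommGroup E] [NormedSpace ℂ E] [CompleteSpace E]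
    (z₀ : ℂ) (k : ℕ) (hk : 1 ≤ k)
    (U : Set ℂ) (hU : IsOpen U) (hz₀ : z₀ ∈ U)
    (A : ℕ → (E →L[ℂ] E)) (H : ℂ → (E →L[ℂ] E))
    (hH : AnalyticOnNhd ℂ H U)
    (R : ℂ → (E →L[ℂ] E))
    (hR : ∀ z ∈ U \ {z₀},
      R z = (∑ j ∈ Finset.Icc 1 k, (z - z₀) ^ (-(j : ℤ)) • A j) + H z)
    (P : E →ₗ[ℂ] E)
    (hres : ∀ z ∈ U \ {z₀}, ∀ f : E, P (R z f) - z • R z f = f)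
    (hbdd : ∀ f : E, ∃ V ∈ 𝓝 z₀, ∃ C : ℝ, ∀ z ∈ V ∩ U, ‖P (H z f)‖ ≤ C) :
    (∀ f : E,
        (∀ j : ℕ, 1 ≤ j → j ≤ k - 1 → P (A j f) - z₀ • A j f = A (j + 1) f) ∧
        P (A k f) - z₀ • A k f = 0) ∧
    (∀ j : ℕ, 1 ≤ j → j ≤ k → ∀ f : E,
        A j f = ((P - z₀ • (1 : Module.End ℂ E)) ^ (j - 1)) (A 1 f)) ∧
    (∀ f : E, ((P - z₀ • (1 : Module.End ℂ E)) ^ k) (A 1 f) = 0) ∧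
    (A k ≠ 0 → ∃ f : E, ((P - z₀ • (1 : Module.End ℂ E)) ^ (k - 1)) (A 1 f) ≠ 0) :=
  stmt_0_general z₀ k hk U hU hz₀ A H hH R hR P hres hbdd
end

section
/- Assume in addition that B is nondegenerate, i.e., if B(v, w) = 0 for all w ∈ V then v = 0. Let A : V → V be a B-symmetric linear map whose range is finite-dimensional of dimension m ≥ 1. Then there exists a basis ψ₁, …, ψ_m of the range of A such that A f = Σ_{i=1}^{m} B(f, ψ_i) ψ_i for every f ∈ V. -/
/-!
Since `B (A u) v = B u (A v)`, the pairing `Q (A u) y := B u y` is a well-defined bilinear form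
on `range A`; it is symmetric and nondegenerate because `B` is. Over `ℂ` every square root
exists, so an orthogonal basis of `(range A, Q)` can be normalised to a `Q`-orthonormal basis
`ψ`, and expanding `A f` in it gives `A f = ∑ Q (A f) ψᵢ • ψᵢ = ∑ B f ψᵢ • ψᵢ`.
-/

open Module
open LinearMap (BilinForm)

namespace LinearMap

section Orthonormal

variable {R M ι : Type*} [CommSemiring R] [AddCommMonoid M] [Module R M] [Fintype ι]
  [DecidableEq ι] {B : BilinForm R M}

theorem BilinForm.repr_eq_of_orthonormal (b : Basis ι R M)
    (hb : ∀ i j, B (b i) (b j) = if i = j then 1 else 0) (x : M) (i : ι) :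
    b.repr x i = B x (b i) := by
  conv_rhs => rw [← b.sum_repr x]
  rw [map_sum, LinearMap.sum_apply]
  simp [hb]

theorem BilinForm.eq_sum_apply_smul_of_orthonormal (b : Basis ι R M)
    (hb : ∀ i j, B (b i) (b j) = if i = j then 1 else 0) (x : M) :
    x = ∑ i, B x (b i) • b i := by
  simp_rw [← repr_eq_of_orthonormal b hb, b.sum_repr]

end Orthonormal

theorem BilinForm.exists_orthonormal_basis {K V : Type*} [Field K] [IsAlgClosed K]
    [Invertible (2 : K)] [AddCommGroup V] [Module K V] [FiniteDimensional K V]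
    {B : BilinForm K V} (hsymm : LinearMap.IsSymm B) (hB : B.SeparatingLeft) :
    ∃ b : Basis (Fin (finrank K V)) K V, ∀ i j, B (b i) (b j) = if i = j then 1 else 0 := by
  obtain ⟨v, hv⟩ := exists_orthogonal_basis hsymm
  have hvv : ∀ i, B (v i) (v i) ≠ 0 := hv.not_isOrtho_basis_self_of_separatingLeft hB
  choose c hc using fun i => IsAlgClosed.exists_pow_nat_eq (B (v i) (v i)) two_pos
  have hc0 : ∀ i, c i ≠ 0 := fun i h => hvv i (by rw [← hc i, h]; ring)
  refine ⟨v.isUnitSMul (w := fun i => (c i)⁻¹) fun i => (inv_ne_zero (hc0 i)).isUnit,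
    fun i j => ?_⟩
  simp only [Basis.isUnitSMul_apply, map_smul, smul_apply, smul_eq_mul]
  split_ifs with h
  · subst h
    rw [← hc i]
    field_simp [hc0 i]
  · rw [hv h, mul_zero, mul_zero]

section RangeForm

variable {R M : Type*} [CommRing R] [AddCommGroup M] [Module R M] {B : BilinForm R M}
  {A : M →ₗ[R] M}

noncomputable def rangeForm (B : BilinForm R M) (A : M →ₗ[R] M)
    (hA : ∀ u v, B (A u) v = B u (A v)) : BilinForm R (range A) :=
  (ker A).liftQ (B.compl₂ (range A).subtype) (fun k hk => mem_ker.2 <| by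
      ext ⟨_, v, rfl⟩
      simp [← hA, mem_ker.1 hk]) ∘ₗ A.quotKerEquivRange.symm.toLinearMap

variable (hA : ∀ u v, B (A u) v = B u (A v))

theorem rangeForm_rangeRestrict (u : M) (y : range A) :
    rangeForm B A hA (A.rangeRestrict u) y = B u y := by
  rw [show A.rangeRestrict u = ⟨A u, mem_range_self A u⟩ from rfl]
  simp [rangeForm, quotKerEquivRange_symm_apply_image]

theorem isSymm_rangeForm (hB : LinearMap.IsSymm B) : LinearMap.IsSymm (rangeForm B A hA) := by
  refine ⟨fun x y => ?_⟩
  obtain ⟨u, rfl⟩ := A.surjective_rangeRestrict x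
  obtain ⟨v, rfl⟩ := A.surjective_rangeRestrict y
  rw [RingHom.id_apply, rangeForm_rangeRestrict, rangeForm_rangeRestrict, codRestrict_apply,
    codRestrict_apply, ← hB.eq, ← hA, RingHom.id_apply]

theorem separatingLeft_rangeForm (hB : B.SeparatingLeft) :
    (rangeForm B A hA).SeparatingLeft := by
  intro x hx
  obtain ⟨u, rfl⟩ := A.surjective_rangeRestrict x
  refine Subtype.ext (hB (A u) fun v => ?_)
  rw [hA, ← codRestrict_apply (range A) A (x := v), ← rangeForm_rangeRestrict hA]
  exact hx (A.rangeRestrict v)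

end RangeForm

end LinearMap

theorem stmt_3_general
    {V : Type*} [AddCommGroup V] [Module ℂ V]
    (B : V →ₗ[ℂ] V →ₗ[ℂ] ℂ)
    (hsymm : ∀ u v : V, B u v = B v u)
    (hnd : ∀ v : V, (∀ w : V, B v w = 0) → v = 0)
    (A : V →ₗ[ℂ] V)
    (hAsymm : ∀ u v : V, B (A u) v = B u (A v))
    (m : ℕ)
    (hfin : FiniteDimensional ℂ (LinearMap.range A))
    (hrank : Module.finrank ℂ (LinearMap.range A) = m) :
    ∃ ψ : Fin m → V,
      (∀ i, ψ i ∈ LinearMap.range A) ∧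
      LinearIndependent ℂ ψ ∧
      Submodule.span ℂ (Set.range ψ) = LinearMap.range A ∧
      ∀ f : V, A f = ∑ i, B f (ψ i) • ψ i := by
  subst hrank
  obtain ⟨b, hb⟩ := BilinForm.exists_orthonormal_basis
    (LinearMap.isSymm_rangeForm hAsymm ⟨hsymm⟩) (LinearMap.separatingLeft_rangeForm hAsymm hnd)
  refine ⟨fun i => b i, fun i => (b i).2,
    b.linearIndependent.map' _ (Submodule.ker_subtype _), ?_, fun f => ?_⟩
  · rw [Set.range_comp', ← Submodule.coe_subtype, Submodule.span_image, b.span_eq,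
      Submodule.map_subtype_top]
  · have hexp := congrArg Subtype.val
      (BilinForm.eq_sum_apply_smul_of_orthonormal b hb (A.rangeRestrict f))
    simpa only [LinearMap.rangeForm_rangeRestrict, LinearMap.codRestrict_apply,
      Submodule.coe_sum, Submodule.coe_smul] using hexp

/-- a `B`-symmetric operator with finite-dimensional range of dimension
`m ≥ 1` (with `B` a nondegenerate symmetric bilinear form) admits a basis `ψ₁, …, ψ_m`
of its range such that `A f = Σᵢ B(f, ψᵢ) ψᵢ` (cf. Proposition 2.2 of the paper). -/
theorem stmt_3
    {V : Type*} [AddCommGroup V] [Module ℂ V]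
    (B : V →ₗ[ℂ] V →ₗ[ℂ] ℂ)
    (hsymm : ∀ u v : V, B u v = B v u)
    (hnd : ∀ v : V, (∀ w : V, B v w = 0) → v = 0)
    (A : V →ₗ[ℂ] V)
    (hAsymm : ∀ u v : V, B (A u) v = B u (A v))
    (m : ℕ) (hm : 1 ≤ m)
    (hfin : FiniteDimensional ℂ (LinearMap.range A))
    (hrank : Module.finrank ℂ (LinearMap.range A) = m) :
    ∃ ψ : Fin m → V,
      (∀ i, ψ i ∈ LinearMap.range A) ∧
      LinearIndependent ℂ ψ ∧
      Submodule.span ℂ (Set.range ψ) = LinearMap.range A ∧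
      ∀ f : V, A f = ∑ i, B f (ψ i) • ψ i :=
  stmt_3_general B hsymm hnd A hAsymm m hfin hrank
end

section
/- Let m ≥ 2 and let ψ₁, …, ψ_m : U → ℂ be continuous functions such that for every W ∈ C_c^∞(U) there exists a constant c ∈ ℂ (depending on W) with ∫_U W(x)·ψ_i(x)·ψ_j(x) dx = c·δ_{ij} for all 1 ≤ i, j ≤ m. Then ψ_i(x) = 0 for every x ∈ U and every 1 ≤ i ≤ m. -/
open MeasureTheory

-- auxiliary: integrability of W • f on U
lemma aux_integrableOn {d : ℕ} {U : Set (EuclideanSpace ℝ (Fin d))} (hU : IsOpen U)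
    {W : EuclideanSpace ℝ (Fin d) → ℝ} {f : EuclideanSpace ℝ (Fin d) → ℂ}
    (hWc : Continuous W) (hWs : HasCompactSupport W) (hWU : tsupport W ⊆ U)
    (hf : ContinuousOn f U) :
    Integrable (fun x => W x • f x) (volume.restrict U) := by
  have hcont : Continuous (fun x => W x • f x) := by
    rw [continuous_iff_continuousAt]
    intro x
    by_cases hx : x ∈ tsupport W
    · exact (hWc.continuousOn.smul hf).continuousAt (hU.mem_nhds (hWU hx))
    · have hev : (fun x => W x • f x) =ᶠ[nhds x] (fun _ => (0 : ℂ)) := by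
        filter_upwards [(isClosed_tsupport W).isOpen_compl.mem_nhds hx] with y hy
        simp [image_eq_zero_of_notMem_tsupport hy]
      exact ContinuousAt.congr (continuousAt_const) hev.symm
  have hsupp : HasCompactSupport (fun x => W x • f x) := by
    apply IsCompact.of_isClosed_subset hWs isClosed_closure
    apply closure_mono
    intro x hx
    simp only [Function.mem_support] at hx ⊢
    intro h0
    exact hx (by simp [h0])
  exact (hcont.integrable_of_hasCompactSupport hsupp).integrableOn

-- auxiliary: fundamental lemma of calculus of variations, pointwise on open set
lemma aux_vanish {d : ℕ} {U : Set (EuclideanSpace ℝ (Fin d))} (hU : IsOpen U)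
    {f : EuclideanSpace ℝ (Fin d) → ℂ} (hf : ContinuousOn f U)
    (h : ∀ W : EuclideanSpace ℝ (Fin d) → ℝ,
      ContDiff ℝ (⊤ : ℕ∞) W → HasCompactSupport W → tsupport W ⊆ U →
      ∫ x in U, W x • f x = 0) :
    ∀ x ∈ U, f x = 0 := by
  have hae : ∀ᵐ x, x ∈ U → f x = 0 := by
    apply hU.ae_eq_zero_of_integral_contDiff_smul_eq_zero
      (hf.locallyIntegrableOn hU.measurableSet)
    intro g hg1 hg2 hg3
    have : ∫ x, g x • f x = ∫ x in U, g x • f x := by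
      rw [MeasureTheory.setIntegral_eq_integral_of_forall_compl_eq_zero]
      intro x hx
      have : g x = 0 := image_eq_zero_of_notMem_tsupport (fun h => hx (hg3 h))
      simp [this]
    rw [this]
    exact h g hg1 hg2 hg3
  intro x hx
  by_contra hne
  have hca : ContinuousAt f x := hf.continuousAt (hU.mem_nhds hx)
  have hev : ∀ᶠ y in nhds x, f y ≠ 0 := hca.eventually_ne hne
  have hmem : {y | y ∈ U ∧ f y ≠ 0} ∈ nhds x := by
    filter_upwards [hev, hU.mem_nhds hx] with y h1 h2
    exact ⟨h2, h1⟩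
  obtain ⟨V, hVsub, hVopen, hxV⟩ := mem_nhds_iff.mp hmem
  have hpos : 0 < volume V := hVopen.measure_pos volume ⟨x, hxV⟩
  have hzero : volume V = 0 := by
    apply measure_mono_null _ (MeasureTheory.ae_iff.mp hae)
    intro y hy
    obtain ⟨h1, h2⟩ := hVsub hy
    simp only [Set.mem_setOf_eq]
    tauto
  exact absurd hzero hpos.ne'

/-- the eigenvalue-splitting step of Section 5 of the paper: if `m ≥ 2`
continuous functions `ψ₁, …, ψ_m` on a nonempty open `U ⊆ ℝ^d` satisfy
`∫_U W ψᵢ ψⱼ = c(W) δᵢⱼ` for every `W ∈ C_c^∞(U)`, then all the `ψᵢ` vanish on `U`. -/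
theorem stmt_9
    {d : ℕ} (U : Set (EuclideanSpace ℝ (Fin d)))
    (hU : IsOpen U) (hUne : U.Nonempty)
    (m : ℕ) (hm : 2 ≤ m)
    (ψ : Fin m → EuclideanSpace ℝ (Fin d) → ℂ)
    (hψ : ∀ i, ContinuousOn (ψ i) U)
    (hint : ∀ W : EuclideanSpace ℝ (Fin d) → ℝ,
      ContDiff ℝ (⊤ : ℕ∞) W → HasCompactSupport W → tsupport W ⊆ U →
      ∃ c : ℂ, ∀ i j,
        ∫ x in U, W x • (ψ i x * ψ j x) = if i = j then c else 0) :
    ∀ i, ∀ x ∈ U, ψ i x = 0 := by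
  intro i x hx
  -- pick j ≠ i
  haveI : Nontrivial (Fin m) := Fin.nontrivial_iff_two_le.mpr hm
  obtain ⟨j, hij⟩ : ∃ j : Fin m, j ≠ i := exists_ne i
  have hmul : ∀ i' j' : Fin m, ContinuousOn (fun x => ψ i' x * ψ j' x) U :=
    fun i' j' => (hψ i').mul (hψ j')
  -- off-diagonal products vanish
  have hoff : ψ i x * ψ j x = 0 := by
    refine aux_vanish hU (hmul i j) (fun W hW1 hW2 hW3 => ?_) x hx
    obtain ⟨c, hc⟩ := hint W hW1 hW2 hW3
    have := hc i j
    rwa [if_neg (Ne.symm hij)] at this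
  -- diagonal products agree
  have hdiag : ψ i x * ψ i x = ψ j x * ψ j x := by
    have := aux_vanish hU (f := fun x => ψ i x * ψ i x - ψ j x * ψ j x)
      ((hmul i i).sub (hmul j j)) (fun W hW1 hW2 hW3 => ?_) x hx
    · linear_combination this
    · obtain ⟨c, hc⟩ := hint W hW1 hW2 hW3
      have h1 := hc i i
      have h2 := hc j j
      rw [if_pos rfl] at h1 h2
      have hint1 := aux_integrableOn hU hW1.continuous hW2 hW3 (hmul i i)
      have hint2 := aux_integrableOn hU hW1.continuous hW2 hW3 (hmul j j)
      calc ∫ x in U, W x • (ψ i x * ψ i x - ψ j x * ψ j x)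
          = ∫ x in U, (W x • (ψ i x * ψ i x) - W x • (ψ j x * ψ j x)) := by
            congr 1; ext y; rw [smul_sub]
        _ = (∫ x in U, W x • (ψ i x * ψ i x)) - ∫ x in U, W x • (ψ j x * ψ j x) :=
            integral_sub hint1 hint2
        _ = 0 := by rw [h1, h2, sub_self]
  by_cases hj : ψ j x = 0
  · rw [hj, mul_zero] at hdiag
    exact mul_self_eq_zero.mp hdiag
  · rcases mul_eq_zero.mp hoff with h | h
    · exact h
    · exact absurd h hj
end

section
/- Let E be a complex Banach space, let a < b be real numbers, and let Π : [a, b] → L(E) be continuous in operator norm with Π_t ∘ Π_t = Π_t for every t ∈ [a, b]. If the range of Π_a is finite-dimensional of dimension m, then for every t ∈ [a, b] the range of Π_t is finite-dimensional of dimension m. -/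
/-!
For idempotents `p`, `q` in a ring, `u = 1 + (2p - 1)(q - p)` satisfies `u q = p u`, and `u = 1`
when `q = p`. In a Banach algebra the units are open, so for `q` close to `p` the element `u` is
invertible and maps the range of `q` isomorphically onto that of `p`. Along a continuous family of
projections the isomorphism class of the range is therefore locally constant, hence constant on
the connected interval `[a, b]`.
-/

open Filter Topology

section Intertwiner

variable {R : Type*}

def idempotentIntertwiner [Ring R] (p q : R) : R := 1 + (2 * p - 1) * (q - p)

theorem idempotentIntertwiner_self [Ring R] (p : R) : idempotentIntertwiner p p = 1 := by
  simp [idempotentIntertwiner]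

theorem IsIdempotentElem.idempotentIntertwiner_mul [Ring R] {p q : R}
    (hp : IsIdempotentElem p) (hq : IsIdempotentElem q) :
    idempotentIntertwiner p q * q = p * idempotentIntertwiner p q := by
  have hp : p * p = p := hp
  have hq : q * q = q := hq
  have hpqq : p * q * q = p * q := by rw [mul_assoc, hq]
  simp only [idempotentIntertwiner, two_mul, mul_add, add_mul, mul_sub, sub_mul, ← mul_assoc,
    hp, hq, hpqq, one_mul, mul_one]
  abel

theorem eventually_isUnit_idempotentIntertwiner [NormedRing R] [HasSummableGeomSeries R] (p : R) :
    ∀ᶠ q in 𝓝 p, IsUnit (idempotentIntertwiner p q) :=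
  have hcont : Continuous (idempotentIntertwiner p) := by
    unfold idempotentIntertwiner
    fun_prop
  hcont.continuousAt.eventually_mem (by rw [idempotentIntertwiner_self]; exact Units.nhds 1)

end Intertwiner

theorem LinearEquiv.map_range_eq_range_of_comp_eq {R M M₂ : Type*} [Semiring R]
    [AddCommMonoid M] [AddCommMonoid M₂] [Module R M] [Module R M₂]
    (e : M ≃ₗ[R] M₂) {f : M →ₗ[R] M} {g : M₂ →ₗ[R] M₂} (h : e.toLinearMap ∘ₗ f = g ∘ₗ e) :
    (LinearMap.range f).map e.toLinearMap = LinearMap.range g := by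
  rw [← LinearMap.range_comp, h, LinearMap.range_comp, LinearEquiv.range, Submodule.map_top]

theorem ContinuousLinearMap.nonempty_range_equiv_of_isUnit_mul_eq
    {𝕜 E : Type*} [Ring 𝕜] [TopologicalSpace E] [AddCommGroup E] [Module 𝕜 E]
    {u P Q : E →L[𝕜] E} (hu : IsUnit u) (h : u * Q = P * u) :
    Nonempty (LinearMap.range (Q : E →ₗ[𝕜] E) ≃ₗ[𝕜] LinearMap.range (P : E →ₗ[𝕜] E)) := by
  obtain ⟨u, rfl⟩ := hu
  let e := (ContinuousLinearEquiv.unitsEquiv 𝕜 E u).toLinearEquiv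
  have hmap := e.map_range_eq_range_of_comp_eq (f := Q) (g := P)
    (congrArg ContinuousLinearMap.toLinearMap h)
  exact ⟨(e.submoduleMap _).trans (LinearEquiv.ofEq _ _ hmap)⟩

section ContinuousFamily

variable {𝕜 E : Type*} [NontriviallyNormedField 𝕜] [NormedAddCommGroup E] [NormedSpace 𝕜 E]
  [CompleteSpace E]

theorem ContinuousOn.eventually_nonempty_range_equiv
    {X : Type*} [TopologicalSpace X] {Pr : X → E →L[𝕜] E} {s : Set X} (hcont : ContinuousOn Pr s)
    (hproj : ∀ x ∈ s, IsIdempotentElem (Pr x)) {x : X} (hx : x ∈ s) :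
    ∀ᶠ y in 𝓝[s] x,
      Nonempty (LinearMap.range (Pr x : E →ₗ[𝕜] E) ≃ₗ[𝕜] LinearMap.range (Pr y : E →ₗ[𝕜] E)) := by
  filter_upwards [hcont x hx (eventually_isUnit_idempotentIntertwiner (Pr x)),
    self_mem_nhdsWithin] with y hunit hy
  exact (ContinuousLinearMap.nonempty_range_equiv_of_isUnit_mul_eq hunit
    ((hproj x hx).idempotentIntertwiner_mul (hproj y hy))).map LinearEquiv.symm

theorem IsPreconnected.nonempty_range_equiv
    {X : Type*} [TopologicalSpace X] {Pr : X → E →L[𝕜] E} {s : Set X} (hs : IsPreconnected s)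
    (hcont : ContinuousOn Pr s) (hproj : ∀ x ∈ s, IsIdempotentElem (Pr x))
    {x y : X} (hx : x ∈ s) (hy : y ∈ s) :
    Nonempty (LinearMap.range (Pr x : E →ₗ[𝕜] E) ≃ₗ[𝕜] LinearMap.range (Pr y : E →ₗ[𝕜] E)) :=
  hs.induction₂ (fun x y ↦ Nonempty (LinearMap.range (Pr x : E →ₗ[𝕜] E) ≃ₗ[𝕜]
      LinearMap.range (Pr y : E →ₗ[𝕜] E)))
    (fun _ hx ↦ hcont.eventually_nonempty_range_equiv hproj hx)
    (fun _ _ _ _ _ _ ⟨e⟩ ⟨e'⟩ ↦ ⟨e.trans e'⟩) (fun _ _ _ _ ⟨e⟩ ↦ ⟨e.symm⟩) hx hy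

end ContinuousFamily

theorem stmt_11_general
    {E : Type*} [NormedAddCommGroup E] [NormedSpace ℂ E] [CompleteSpace E]
    (a b : ℝ)
    (Pr : ℝ → (E →L[ℂ] E))
    (hcont : ContinuousOn Pr (Set.Icc a b))
    (hproj : ∀ t ∈ Set.Icc a b, Pr t ∘L Pr t = Pr t)
    (m : ℕ)
    (hfin : FiniteDimensional ℂ (LinearMap.range (Pr a : E →ₗ[ℂ] E)))
    (hrank : Module.finrank ℂ (LinearMap.range (Pr a : E →ₗ[ℂ] E)) = m) :
    ∀ t ∈ Set.Icc a b,
      FiniteDimensional ℂ (LinearMap.range (Pr t : E →ₗ[ℂ] E)) ∧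
        Module.finrank ℂ (LinearMap.range (Pr t : E →ₗ[ℂ] E)) = m := by
  intro t ht
  obtain ⟨e⟩ := isPreconnected_Icc.nonempty_range_equiv hcont hproj
    (Set.left_mem_Icc.2 (ht.1.trans ht.2)) ht
  exact ⟨e.finiteDimensional, e.finrank_eq.symm.trans hrank⟩

/-- along a norm-continuous family of projections on a Banach space,
the rank is constant (used in Sections 5–6 of the paper for the Riesz projections
`Π_{tV}` as the potential perturbation is switched on). -/
theorem stmt_11
    {E : Type*} [NormedAddCommGroup E] [NormedSpace ℂ E] [CompleteSpace E]
    (a b : ℝ) (hab : a < b)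
    (Pr : ℝ → (E →L[ℂ] E))
    (hcont : ContinuousOn Pr (Set.Icc a b))
    (hproj : ∀ t ∈ Set.Icc a b, Pr t ∘L Pr t = Pr t)
    (m : ℕ)
    (hfin : FiniteDimensional ℂ (LinearMap.range (Pr a : E →ₗ[ℂ] E)))
    (hrank : Module.finrank ℂ (LinearMap.range (Pr a : E →ₗ[ℂ] E)) = m) :
    ∀ t ∈ Set.Icc a b,
      FiniteDimensional ℂ (LinearMap.range (Pr t : E →ₗ[ℂ] E)) ∧
        Module.finrank ℂ (LinearMap.range (Pr t : E →ₗ[ℂ] E)) = m :=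
  stmt_11_general a b Pr hcont hproj m hfin hrank
end
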